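/- Let H ∈ ℍ^{n×n} be a Hermitian quaternion matrix. Then H is quaternion-PSD (i.e., Re(v* H v) ≥ 0 for all v ∈ ℍ^n) if and only if the real matrix Λ(H) is positive semidefinite. -/

import Mathlib

open Matrix

/-!
Writing `a, c ∈ ℍ` in real coordinates, `Re (a* h c)` is the real bilinear form whose
Gram matrix is the `4 × 4` block of `Λ` built from `h`. Summing over the entries of `H`,
`Re (v* H v) = xᵀ Λ(H) x` where `x ∈ ℝ^{4n}` collects the coordinates of `v`, and this
correspondence `v ↦ x` is bijective. What remains of `Matrix.PosSemidef` is the symmetry of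
`Λ(H)`, which follows from `H` being Hermitian.
-/

/-- The real `4n × 4n` block matrix `Λ(H)` associated with a quaternion matrix `H`,
indexed by `Fin 4 × Fin n` with block order `R, I, J, K`. -/
noncomputable def lambdaMat {n : ℕ} (H : Matrix (Fin n) (Fin n) (Quaternion ℝ)) :
    Matrix (Fin 4 × Fin n) (Fin 4 × Fin n) ℝ := fun p q =>
  ![![(H p.2 q.2).re, -(H p.2 q.2).imI, -(H p.2 q.2).imJ, -(H p.2 q.2).imK],
    ![(H p.2 q.2).imI, (H p.2 q.2).re, -(H p.2 q.2).imK, (H p.2 q.2).imJ],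
    ![(H p.2 q.2).imJ, (H p.2 q.2).imK, (H p.2 q.2).re, -(H p.2 q.2).imI],
    ![(H p.2 q.2).imK, -(H p.2 q.2).imJ, (H p.2 q.2).imI, (H p.2 q.2).re]] p.1 q.1

lemma Quaternion.re_sum {R ι : Type*} [CommRing R] (s : Finset ι) (f : ι → Quaternion R) :
    (∑ i ∈ s, f i).re = ∑ i ∈ s, (f i).re :=
  map_sum (QuaternionAlgebra.reₗ _ _ _) f s

noncomputable def quaternionCoords (n : ℕ) : (Fin n → Quaternion ℝ) ≃ (Fin 4 × Fin n → ℝ) :=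
  (Equiv.piCongrRight fun _ => Quaternion.equivTuple ℝ).trans <|
    (Equiv.curry (Fin n) (Fin 4) ℝ).symm.trans <|
      Equiv.arrowCongr (Equiv.prodComm _ _) (Equiv.refl ℝ)

@[simp]
lemma quaternionCoords_apply {n : ℕ} (v : Fin n → Quaternion ℝ) (i : Fin 4) (k : Fin n) :
    quaternionCoords n v (i, k) = ![(v k).re, (v k).imI, (v k).imJ, (v k).imK] i :=
  rfl

lemma lambdaMat_isHermitian {n : ℕ} {H : Matrix (Fin n) (Fin n) (Quaternion ℝ)}
    (hH : H.IsHermitian) : (lambdaMat H).IsHermitian := by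
  ext ⟨i, k⟩ ⟨j, l⟩
  have hkl : H k l = star (H l k) := (hH.apply k l).symm
  simp only [conjTranspose_apply, star_trivial, lambdaMat, hkl]
  fin_cases i <;> fin_cases j <;> simp

lemma re_star_mul_mul_eq_sum_lambdaMat {n : ℕ} (H : Matrix (Fin n) (Fin n) (Quaternion ℝ))
    (v : Fin n → Quaternion ℝ) (k l : Fin n) :
    (star (v k) * H k l * v l).re =
      ∑ i, ∑ j, quaternionCoords n v (i, k) * lambdaMat H (i, k) (j, l) *
        quaternionCoords n v (j, l) := by
  simp only [Fin.sum_univ_four, quaternionCoords_apply, lambdaMat]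
  simp only [Quaternion.re_mul, Quaternion.imI_mul, Quaternion.imJ_mul, Quaternion.imK_mul,
    Quaternion.re_star, Quaternion.imI_star, Quaternion.imJ_star, Quaternion.imK_star,
    Fin.isValue, cons_val_zero, cons_val_one, cons_val]
  ring

lemma re_quadraticForm_eq_dotProduct_lambdaMat {n : ℕ}
    (H : Matrix (Fin n) (Fin n) (Quaternion ℝ)) (v : Fin n → Quaternion ℝ) :
    (∑ k, ∑ l, star (v k) * H k l * v l).re =
      quaternionCoords n v ⬝ᵥ lambdaMat H *ᵥ quaternionCoords n v := by
  simp only [Quaternion.re_sum, re_star_mul_mul_eq_sum_lambdaMat]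
  simp only [dotProduct, mulVec, Finset.mul_sum, Fintype.sum_prod_type, mul_assoc]
  exact (Finset.sum_congr rfl fun k _ => Finset.sum_comm.trans
    (Finset.sum_congr rfl fun i _ => Finset.sum_comm)).trans Finset.sum_comm

/-- A Hermitian quaternion matrix `H` is quaternion-PSD iff `Λ(H)` is positive
semidefinite. -/
theorem quaternion_psd_iff_lambda_posSemidef {n : ℕ}
    (H : Matrix (Fin n) (Fin n) (Quaternion ℝ)) (hH : H = Hᴴ) :
    (∀ v : Fin n → Quaternion ℝ, 0 ≤ (∑ k, ∑ l, star (v k) * H k l * v l).re) ↔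
      (lambdaMat H).PosSemidef := by
  rw [posSemidef_iff_dotProduct_mulVec, and_iff_right (lambdaMat_isHermitian hH.symm),
    ← (quaternionCoords n).forall_congr_right]
  simp only [star_trivial, re_quadraticForm_eq_dotProduct_lambdaMat]
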